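/- arXiv:2303.01085 — 2 statements merged into one kernel-verified Lean document; each statement's English description precedes it below -/
import Mathlib

section
/- Let k ≥ 2, 1 ≤ r ≤ k−1, and let m, m_1, …, m_k be positive integers. If e_{k-r}^m ∉ (x_1^{m_1},…,x_{k-r}^{m_{k-r}}) in F_2[x_1,…,x_{k-r}] and e_r^{2^{k-r} m} ∉ (x_{k-r+1}^{m_{k-r+1}},…,x_k^{m_k}) (as a polynomial in the variables x_{k-r+1},…,x_k), then e_k^m ∉ (x_1^{m_1},…,x_k^{m_k}) in F_2[x_1,…,x_k]. -/
open MvPolynomial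

/-- The top Dickson polynomial `e_k = ∏_{0 ≠ α ∈ F_2^k} (α_1 x_1 + ⋯ + α_k x_k)`
in `F_2[x_1,…,x_k]`. -/
noncomputable def ek (k : ℕ) : MvPolynomial (Fin k) (ZMod 2) :=
  ∏ α ∈ Finset.univ.filter (fun α : Fin k → ZMod 2 => α ≠ 0),
    ∑ i, C (α i) * X i


lemma mem_span_pow_iff {N : ℕ} (n : Fin N → ℕ) (f : MvPolynomial (Fin N) (ZMod 2)) :
    f ∈ Ideal.span (Set.range fun i : Fin N => (X i : MvPolynomial (Fin N) (ZMod 2)) ^ n i) ↔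
      ∀ d ∈ f.support, ∃ i, n i ≤ d i := by
  have : (Set.range fun i : Fin N => (X i : MvPolynomial (Fin N) (ZMod 2)) ^ n i)
      = (fun s => monomial s (1 : ZMod 2)) '' (Set.range fun i => Finsupp.single i (n i)) := by
    rw [Set.image_eq_range]
    ext p
    simp only [Set.mem_range, Subtype.exists, Set.range, Set.mem_setOf_eq]
    constructor
    · rintro ⟨i, rfl⟩; exact ⟨Finsupp.single i (n i), ⟨i, rfl⟩, X_pow_eq_monomial.symm⟩
    · rintro ⟨_, ⟨i, rfl⟩, rfl⟩; exact ⟨i, X_pow_eq_monomial⟩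
  rw [this, mem_ideal_span_monomial_image]
  refine forall₂_congr fun d hd => ?_
  constructor
  · rintro ⟨_, ⟨i, rfl⟩, h⟩; exact ⟨i, by simpa using Finsupp.single_le_iff.mp h⟩
  · rintro ⟨i, h⟩; exact ⟨_, ⟨i, rfl⟩, Finsupp.single_le_iff.mpr h⟩


lemma coeff_rename_mul_rename {σ₁ σ₂ τ : Type*} [DecidableEq τ] {f : σ₁ → τ} {g : σ₂ → τ}
    (hf : Function.Injective f) (hg : Function.Injective g)
    (hfg : ∀ i j, f i ≠ g j)
    (p : MvPolynomial σ₁ (ZMod 2)) (q : MvPolynomial σ₂ (ZMod 2))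
    (a : σ₁ →₀ ℕ) (b : σ₂ →₀ ℕ) :
    coeff (a.mapDomain f + b.mapDomain g) (rename f p * rename g q)
      = coeff a p * coeff b q := by
  have hfr : ∀ i : σ₁, f i ∉ Set.range g := by rintro i ⟨j, hj⟩; exact hfg i j hj.symm
  have hgr : ∀ j : σ₂, g j ∉ Set.range f := by rintro j ⟨i, hi⟩; exact hfg i j hi
  rw [coeff_mul]
  rw [Finset.sum_eq_single_of_mem (a.mapDomain f, b.mapDomain g)
    (Finset.HasAntidiagonal.mem_antidiagonal.mpr rfl)]
  · rw [coeff_rename_mapDomain f hf, coeff_rename_mapDomain g hg]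
  · rintro ⟨u, v⟩ huv hne
    by_contra hc
    rcases mul_ne_zero_iff.mp hc with ⟨hu, hv⟩
    obtain ⟨a', ha', ha'0⟩ := coeff_rename_ne_zero f p u hu
    obtain ⟨b', hb', hb'0⟩ := coeff_rename_ne_zero g q v hv
    have hsum : a'.mapDomain f + b'.mapDomain g = a.mapDomain f + b.mapDomain g := by
      rw [ha', hb']; exact Finset.HasAntidiagonal.mem_antidiagonal.mp huv
    have ha2 : a' = a := by
      ext i
      have := congrFun (congrArg (⇑) hsum) (f i)
      simpa [Finsupp.mapDomain_apply hf, Finsupp.mapDomain_notin_range _ _ (hfr i)] using this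
    have hb2 : b' = b := by
      ext j
      have := congrFun (congrArg (⇑) hsum) (g j)
      simpa [Finsupp.mapDomain_apply hg, Finsupp.mapDomain_notin_range _ _ (hgr j)] using this
    exact hne (by rw [← ha', ← hb', ha2, hb2])


noncomputable def phi (s k : ℕ) :
    MvPolynomial (Fin k) (ZMod 2) →ₐ[ZMod 2] Polynomial (MvPolynomial (Fin k) (ZMod 2)) :=
  aeval fun i => if (i : ℕ) < s then Polynomial.C (X i) else Polynomial.X * Polynomial.C (X i)

lemma phi_monomial (s k : ℕ) (d : Fin k →₀ ℕ) (c : ZMod 2) :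
    phi s k (monomial d c) =
      Polynomial.C (monomial d c) *
        Polynomial.X ^ (d.sum fun i n => if (i : ℕ) < s then 0 else n) := by
  rw [phi, aeval_monomial]
  have h1 : (d.prod fun i n =>
      (if (i : ℕ) < s then Polynomial.C (X i) else Polynomial.X * Polynomial.C (X i)) ^ n)
      = Polynomial.C (d.prod fun i n => (X i : MvPolynomial (Fin k) (ZMod 2)) ^ n) *
        Polynomial.X ^ (d.sum fun i n => if (i : ℕ) < s then 0 else n) := by
    rw [Finsupp.prod, Finsupp.prod, Finsupp.sum]
    have : ∀ a ∈ d.support,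
        (if (a : ℕ) < s then Polynomial.C (X a) else Polynomial.X * Polynomial.C (X a)) ^ d a
        = Polynomial.C ((X a : MvPolynomial (Fin k) (ZMod 2)) ^ d a) *
            Polynomial.X ^ (if (a : ℕ) < s then 0 else d a) := by
      intro a _
      split_ifs with h
      · simp [Polynomial.C_pow]
      · rw [mul_pow, Polynomial.C_pow]; ring
    rw [Finset.prod_congr rfl this, Finset.prod_mul_distrib, ← map_prod,
      Finset.prod_pow_eq_pow_sum]
  have halg : algebraMap (ZMod 2) (Polynomial (MvPolynomial (Fin k) (ZMod 2))) c
      = Polynomial.C (C c) := rfl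
  rw [h1, halg, ← mul_assoc, ← map_mul, ← monomial_eq]

lemma coeff_coeff_phi {s k : ℕ} (f : MvPolynomial (Fin k) (ZMod 2)) (j : ℕ) (d : Fin k →₀ ℕ)
    (h : coeff d ((phi s k f).coeff j) ≠ 0) : coeff d f ≠ 0 := by
  intro hd
  apply h
  conv_lhs => rw [f.as_sum]
  rw [map_sum, Polynomial.finset_sum_coeff, coeff_sum]
  refine Finset.sum_eq_zero fun b hb => ?_
  rw [phi_monomial, Polynomial.coeff_C_mul, Polynomial.coeff_X_pow]
  rcases eq_or_ne b d with rfl | hbd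
  · simp [hd]
  · split_ifs <;> simp [coeff_monomial, hbd]

lemma phi_linear (s k : ℕ) (α : Fin k → ZMod 2) :
    phi s k (∑ i, C (α i) * X i) =
      Polynomial.C (∑ i ∈ Finset.univ.filter (fun i : Fin k => (i : ℕ) < s), C (α i) * X i) +
      Polynomial.X *
        Polynomial.C (∑ i ∈ Finset.univ.filter (fun i : Fin k => ¬ (i : ℕ) < s),
          C (α i) * X i) := by
  rw [map_sum, ← Finset.sum_filter_add_sum_filter_not Finset.univ (fun i : Fin k => (i : ℕ) < s)]
  rw [map_sum, map_sum, Finset.mul_sum]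
  congr 1
  · refine Finset.sum_congr rfl fun i hi => ?_
    simp only [Finset.mem_filter] at hi
    rw [map_mul, phi]
    simp [hi.2, algHom_C]
  · refine Finset.sum_congr rfl fun i hi => ?_
    simp only [Finset.mem_filter] at hi
    rw [map_mul, phi]
    simp only [aeval_X, hi.2, if_false, aeval_C]
    have : (algebraMap (ZMod 2) (Polynomial (MvPolynomial (Fin k) (ZMod 2)))) (α i)
        = Polynomial.C (C (α i)) := rfl
    rw [this, Polynomial.C_mul]
    ring

lemma lc_phi_linear (s k : ℕ) (α : Fin k → ZMod 2) :
    Polynomial.leadingCoeff (phi s k (∑ i, C (α i) * X i)) =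
      if (∑ i ∈ Finset.univ.filter (fun i : Fin k => ¬ (i : ℕ) < s), C (α i) * X i) = 0
      then ∑ i, C (α i) * X i
      else ∑ i ∈ Finset.univ.filter (fun i : Fin k => ¬ (i : ℕ) < s), C (α i) * X i := by
  rw [phi_linear]
  split_ifs with h
  · rw [h]
    simp only [map_zero, mul_zero, add_zero, Polynomial.leadingCoeff_C]
    rw [← Finset.sum_filter_add_sum_filter_not Finset.univ (fun i : Fin k => (i : ℕ) < s)
      (fun i => C (α i) * X i), h, add_zero]
  · rw [add_comm, mul_comm]
    exact Polynomial.leadingCoeff_linear h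


lemma coeff_linear_form {n : ℕ} (γ : Fin n → ZMod 2) (j : Fin n) :
    coeff (Finsupp.single j 1) (∑ i, C (γ i) * X i) = γ j := by
  rw [coeff_sum]
  rw [Finset.sum_eq_single j]
  · simp [coeff_C_mul, coeff_X']
  · intro i _ hij
    have : ¬ (Finsupp.single i 1 = Finsupp.single j (1:ℕ)) := by
      simp [Finsupp.single_eq_single_iff, hij]
    simp [coeff_C_mul, coeff_X', this]
  · simp

lemma linear_form_eq_zero_iff {n : ℕ} (γ : Fin n → ZMod 2) :
    (∑ i, C (γ i) * X i) = 0 ↔ γ = 0 := by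
  constructor
  · intro h
    funext j
    have := coeff_linear_form γ j
    rw [h] at this
    simpa using this.symm
  · rintro rfl; simp

lemma lc_phi_ek (s r k : ℕ) (hs : 0 < s) (hr : 0 < r) (hk : s + r = k)
    (ι₁ : Fin s → Fin k) (hv1 : ∀ i, (ι₁ i : ℕ) = i)
    (ι₂ : Fin r → Fin k) (hv2 : ∀ j, (ι₂ j : ℕ) = s + j) :
    Polynomial.leadingCoeff (phi s k (ek k)) =
      rename ι₁ (ek s) * (rename ι₂ (ek r)) ^ 2 ^ s := by
  classical
  set E : (Fin s → ZMod 2) × (Fin r → ZMod 2) → (Fin k → ZMod 2) :=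
    fun p i => if h : (i : ℕ) < s then p.1 ⟨i, h⟩ else p.2 ⟨(i : ℕ) - s, by omega⟩ with hE
  have hE1 : ∀ p (i : Fin s), E p (ι₁ i) = p.1 i := by
    intro p i
    have h : ((ι₁ i : ℕ)) < s := by rw [hv1]; exact i.isLt
    simp only [hE, h, dif_pos]
    have : (⟨((ι₁ i : ℕ)), h⟩ : Fin s) = i := by ext; simp [hv1]
    rw [this]
  have hE2 : ∀ p (j : Fin r), E p (ι₂ j) = p.2 j := by
    intro p j
    have h : ¬ ((ι₂ j : ℕ)) < s := by rw [hv2]; omega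
    simp only [hE, h, dif_neg, not_false_iff]
    have : (⟨((ι₂ j : ℕ)) - s, by omega⟩ : Fin r) = j := by ext; simp [hv2]
    rw [this]
  have hEzero : ∀ p, E p = 0 ↔ p = 0 := by
    intro p
    constructor
    · intro h
      have h1 : p.1 = 0 := by funext i; rw [← hE1 p i, h]; rfl
      have h2 : p.2 = 0 := by funext j; rw [← hE2 p j, h]; rfl
      exact Prod.ext h1 h2
    · rintro rfl
      funext i
      simp only [hE]
      split_ifs <;> rfl
  -- inverse of E
  set E' : (Fin k → ZMod 2) → (Fin s → ZMod 2) × (Fin r → ZMod 2) :=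
    fun α => (fun i => α (ι₁ i), fun j => α (ι₂ j)) with hE'
  have hEE' : ∀ α, E (E' α) = α := by
    intro α
    funext i
    simp only [hE, hE']
    split_ifs with h
    · have : ι₁ ⟨(i : ℕ), h⟩ = i := by ext; simp [hv1]
      simp [this]
    · have : ι₂ ⟨(i : ℕ) - s, by omega⟩ = i := by ext; simp [hv2]; omega
      simp [this]
  have hE'E : ∀ p, E' (E p) = p := by
    intro p
    ext1
    · funext i; exact hE1 p i
    · funext j; exact hE2 p j
  -- renamed linear forms
  have hren1 : ∀ β : Fin s → ZMod 2,
      rename ι₁ (∑ i, C (β i) * X i) = ∑ i, C (β i) * X (ι₁ i) := by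
    intro β; rw [map_sum]; exact Finset.sum_congr rfl fun i _ => by simp
  have hren2 : ∀ γ : Fin r → ZMod 2,
      rename ι₂ (∑ j, C (γ j) * X j) = ∑ j, C (γ j) * X (ι₂ j) := by
    intro γ; rw [map_sum]; exact Finset.sum_congr rfl fun j _ => by simp
  have hι₁inj : Function.Injective ι₁ := by
    intro a b h; have := congrArg (Fin.val) h; rw [hv1, hv1] at this; ext; omega
  have hι₂inj : Function.Injective ι₂ := by
    intro a b h; have := congrArg (Fin.val) h; rw [hv2, hv2] at this; ext; omega
  -- the A and B parts at E p
  have hA : ∀ p, (∑ i ∈ Finset.univ.filter (fun i : Fin k => (i : ℕ) < s),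
      C (E p i) * X i) = ∑ i, C (p.1 i) * X (ι₁ i) := by
    intro p
    refine Finset.sum_nbij' (fun i : Fin k => (⟨(i : ℕ) % s, Nat.mod_lt _ hs⟩ : Fin s))
      ι₁ (fun _ _ => Finset.mem_univ _) ?_ ?_ ?_ ?_
    · intro i _; simp [Finset.mem_filter, hv1]
    · intro i hi
      simp only [Finset.mem_filter] at hi
      ext; simp [hv1, Nat.mod_eq_of_lt hi.2]
    · intro i _; ext; simp [hv1, Nat.mod_eq_of_lt i.isLt]
    · intro i hi
      simp only [Finset.mem_filter] at hi
      have h1 : ι₁ ⟨(i : ℕ) % s, Nat.mod_lt _ hs⟩ = i := by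
        ext; simp [hv1, Nat.mod_eq_of_lt hi.2]
      rw [h1]
      congr 1
      rw [← hE1 p ⟨(i : ℕ) % s, Nat.mod_lt _ hs⟩, h1]
  have hB : ∀ p, (∑ i ∈ Finset.univ.filter (fun i : Fin k => ¬ (i : ℕ) < s),
      C (E p i) * X i) = ∑ j, C (p.2 j) * X (ι₂ j) := by
    intro p
    refine Finset.sum_nbij' (fun i : Fin k => (⟨((i : ℕ) - s) % r, Nat.mod_lt _ hr⟩ : Fin r))
      ι₂ (fun _ _ => Finset.mem_univ _) ?_ ?_ ?_ ?_
    · intro j _; simp [Finset.mem_filter, hv2]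
    · intro i hi
      simp only [Finset.mem_filter] at hi
      have hik : (i : ℕ) < k := i.isLt
      ext; simp only [hv2]
      have : ((i : ℕ) - s) % r = (i : ℕ) - s := Nat.mod_eq_of_lt (by omega)
      rw [this]; omega
    · intro j _
      ext
      simp only [hv2]
      have : (s + (j : ℕ)) - s = (j : ℕ) := by omega
      rw [this, Nat.mod_eq_of_lt j.isLt]
    · intro i hi
      simp only [Finset.mem_filter] at hi
      have hik : (i : ℕ) < k := i.isLt
      have h1 : ι₂ ⟨((i : ℕ) - s) % r, Nat.mod_lt _ hr⟩ = i := by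
        ext
        simp only [hv2]
        have : ((i : ℕ) - s) % r = (i : ℕ) - s := Nat.mod_eq_of_lt (by omega)
        rw [this]; omega
      rw [h1]
      congr 1
      rw [← hE2 p ⟨((i : ℕ) - s) % r, Nat.mod_lt _ hr⟩, h1]
  -- main computation
  rw [ek, map_prod, Polynomial.leadingCoeff_prod]
  set G : (Fin s → ZMod 2) × (Fin r → ZMod 2) → MvPolynomial (Fin k) (ZMod 2) :=
    fun p => if p.2 = 0 then rename ι₁ (∑ i, C (p.1 i) * X i)
      else rename ι₂ (∑ j, C (p.2 j) * X j) with hG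
  have step1 : ∀ α ∈ Finset.univ.filter (fun α : Fin k → ZMod 2 => α ≠ 0),
      Polynomial.leadingCoeff (phi s k (∑ i, C (α i) * X i)) = G (E' α) := by
    intro α hα
    have hBα := hB (E' α); rw [hEE'] at hBα
    have hAα := hA (E' α); rw [hEE'] at hAα
    rw [lc_phi_linear, hG]
    beta_reduce
    by_cases hz : (E' α).2 = 0
    · rw [if_pos hz, if_pos (by rw [hBα, hz]; simp)]
      rw [hren1, ← hAα,
        ← Finset.sum_filter_add_sum_filter_not Finset.univ (fun i : Fin k => (i : ℕ) < s)
          (fun i => C (α i) * X i)]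
      rw [show (∑ i ∈ Finset.univ.filter (fun i : Fin k => ¬ (i : ℕ) < s),
          C (α i) * X i) = 0 by rw [hBα, hz]; simp]
      rw [add_zero]
    · have hBne : (∑ i ∈ Finset.univ.filter (fun i : Fin k => ¬ (i : ℕ) < s),
          C (α i) * X i) ≠ 0 := by
        rw [hBα, ← hren2]
        intro hc
        exact hz ((linear_form_eq_zero_iff _).mp
          ((rename_injective _ hι₂inj) (by simpa using hc)))
      rw [if_neg hBne, if_neg hz, hBα, hren2]
  rw [Finset.prod_congr rfl step1]
  have reindex : ∏ α ∈ Finset.univ.filter (fun α : Fin k → ZMod 2 => α ≠ 0), G (E' α)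
      = ∏ p ∈ Finset.univ.filter
          (fun p : (Fin s → ZMod 2) × (Fin r → ZMod 2) => p ≠ 0), G p := by
    refine Finset.prod_nbij' E' E ?_ ?_ ?_ ?_ ?_
    · intro α hα
      simp only [Finset.mem_filter, Finset.mem_univ, true_and] at hα ⊢
      intro h
      apply hα
      rw [← hEE' α, h, (hEzero 0).mpr rfl]
    · intro p hp
      simp only [Finset.mem_filter, Finset.mem_univ, true_and] at hp ⊢
      exact fun h => hp ((hEzero p).mp h)
    · intro α _; exact hEE' α
    · intro p _; exact hE'E p
    · intro α _; rfl
  rw [reindex, ← Finset.prod_filter_mul_prod_filter_not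
    (Finset.univ.filter (fun p : (Fin s → ZMod 2) × (Fin r → ZMod 2) => p ≠ 0))
    (fun p => p.2 = 0) G]
  congr 1
  · -- first part: rename ι₁ (ek s)
    rw [ek, map_prod]
    refine Finset.prod_nbij' (fun p => p.1) (fun β => (β, (0 : Fin r → ZMod 2))) ?_ ?_ ?_ ?_ ?_
    · intro p hp
      simp only [Finset.mem_filter, Finset.mem_univ, true_and] at hp ⊢
      exact fun h => hp.1 (Prod.ext h hp.2)
    · intro β hβ
      have hβ' : β ≠ 0 := by simpa using hβ
      refine Finset.mem_filter.mpr ⟨Finset.mem_filter.mpr ⟨Finset.mem_univ _, ?_⟩, rfl⟩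
      intro h; exact hβ' (congrArg Prod.fst h)
    · intro p hp
      have h2 : p.2 = 0 := (Finset.mem_filter.mp hp).2
      rw [← h2]
    · intro β _; rfl
    · intro p hp
      simp only [Finset.mem_filter] at hp
      rw [hG]
      simp only [if_pos hp.2]
  · -- second part: (rename ι₂ (ek r)) ^ 2 ^ s
    have hset : (Finset.univ.filter
          (fun p : (Fin s → ZMod 2) × (Fin r → ZMod 2) => p ≠ 0)).filter
          (fun p => ¬ p.2 = 0)
        = (Finset.univ : Finset (Fin s → ZMod 2)) ×ˢ
          (Finset.univ.filter (fun γ : Fin r → ZMod 2 => γ ≠ 0)) := by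
      ext p
      simp only [Finset.mem_filter, Finset.mem_univ, true_and, Finset.mem_product]
      constructor
      · rintro ⟨-, h⟩; exact h
      · intro h
        exact ⟨fun hc => h (by rw [hc]; rfl), h⟩
    rw [hset]
    have hval : ∀ p ∈ (Finset.univ : Finset (Fin s → ZMod 2)) ×ˢ
        (Finset.univ.filter (fun γ : Fin r → ZMod 2 => γ ≠ 0)),
        G p = rename ι₂ (∑ j, C (p.2 j) * X j) := by
      intro p hp
      simp only [Finset.mem_product, Finset.mem_filter, Finset.mem_univ, true_and] at hp
      rw [hG]
      simp only [if_neg hp]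
    rw [Finset.prod_congr rfl hval, Finset.prod_product]
    dsimp only
    rw [Finset.prod_const]
    rw [ek, map_prod]
    rw [Finset.card_univ]
    have : Fintype.card (Fin s → ZMod 2) = 2 ^ s := by
      rw [Fintype.card_fun]
      simp
    rw [this]

set_option maxHeartbeats 2000000 in
theorem stmt4 (k r : ℕ) (hk : 2 ≤ k) (hr1 : 1 ≤ r) (hr2 : r ≤ k - 1)
    (m : ℕ) (hm : 0 < m)
    (mv : Fin k → ℕ) (hmvpos : ∀ i, 0 < mv i)
    (h1 : ek (k - r) ^ m ∉
        Ideal.span (Set.range fun i : Fin (k - r) =>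
          (X i : MvPolynomial (Fin (k - r)) (ZMod 2)) ^ mv (Fin.castLE (Nat.sub_le k r) i)))
    (h2 : ek r ^ (2 ^ (k - r) * m) ∉
        Ideal.span (Set.range fun i : Fin r =>
          (X i : MvPolynomial (Fin r) (ZMod 2)) ^
            mv ⟨k - r + (i : ℕ), by have := i.isLt; omega⟩)) :
    ek k ^ m ∉ Ideal.span (Set.range fun i : Fin k => X i ^ mv i) := by
  classical
  intro hmem
  have hs : 0 < k - r := by omega
  have hr : 0 < r := hr1
  have hk' : (k - r) + r = k := by omega
  set ι₁ : Fin (k - r) → Fin k := Fin.castLE (Nat.sub_le k r) with hι₁def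
  set ι₂ : Fin r → Fin k := fun j => ⟨k - r + (j : ℕ), by omega⟩ with hι₂def
  have hv1 : ∀ i, ((ι₁ i : ℕ)) = (i : ℕ) := fun i => rfl
  have hv2 : ∀ j, ((ι₂ j : ℕ)) = (k - r) + (j : ℕ) := fun j => rfl
  have hι₁inj : Function.Injective ι₁ := by
    intro x y h; have := congrArg (Fin.val) h; rw [hv1, hv1] at this; exact Fin.ext this
  have hι₂inj : Function.Injective ι₂ := by
    intro x y h; have := congrArg (Fin.val) h; rw [hv2, hv2] at this; ext; omega
  have hdisj : ∀ i j, ι₁ i ≠ ι₂ j := by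
    intro i j h
    have := congrArg (Fin.val) h
    rw [hv1, hv2] at this
    have := i.isLt
    omega
  -- extract witness monomials
  rw [mem_span_pow_iff] at h1 h2
  push_neg at h1 h2
  obtain ⟨a, ha, ha2⟩ := h1
  obtain ⟨b, hb, hb2⟩ := h2
  rw [mem_span_pow_iff] at hmem
  -- the combined monomial
  set d : Fin k →₀ ℕ := a.mapDomain ι₁ + b.mapDomain ι₂ with hd
  -- leading coefficient computation
  have hlc : Polynomial.leadingCoeff (phi (k - r) k (ek k ^ m)) =
      rename ι₁ (ek (k - r) ^ m) * rename ι₂ (ek r ^ (2 ^ (k - r) * m)) := by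
    rw [map_pow, Polynomial.leadingCoeff_pow,
      lc_phi_ek (k - r) r k hs hr hk' ι₁ hv1 ι₂ hv2, mul_pow, ← pow_mul,
      ← map_pow, ← map_pow]
  have hcoeff : coeff d (rename ι₁ (ek (k - r) ^ m) * rename ι₂ (ek r ^ (2 ^ (k - r) * m)))
      = coeff a (ek (k - r) ^ m) * coeff b (ek r ^ (2 ^ (k - r) * m)) :=
    coeff_rename_mul_rename hι₁inj hι₂inj hdisj _ _ a b
  have hane : coeff a (ek (k - r) ^ m) ≠ 0 := mem_support_iff.mp ha
  have hbne : coeff b (ek r ^ (2 ^ (k - r) * m)) ≠ 0 := mem_support_iff.mp hb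
  have hdne : coeff d (ek k ^ m) ≠ 0 := by
    apply coeff_coeff_phi (s := k - r) _ (Polynomial.natDegree (phi (k - r) k (ek k ^ m)))
    rw [← Polynomial.leadingCoeff, hlc, hcoeff]
    exact mul_ne_zero hane hbne
  obtain ⟨i, hi⟩ := hmem d (mem_support_iff.mpr hdne)
  -- show d i < mv i, contradiction
  have hdi : d i < mv i := by
    by_cases h : (i : ℕ) < k - r
    · have hii : ι₁ ⟨(i : ℕ), h⟩ = i := Fin.ext rfl
      have e1 : d (ι₁ ⟨(i : ℕ), h⟩) = a ⟨(i : ℕ), h⟩ := by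
        rw [hd, Finsupp.add_apply, Finsupp.mapDomain_apply hι₁inj,
          Finsupp.mapDomain_notin_range, add_zero]
        rintro ⟨j, hj⟩
        exact hdisj _ _ hj.symm
      have e2 := ha2 ⟨(i : ℕ), h⟩
      rw [hii] at e1 e2
      rw [e1]
      exact e2
    · have hik : (i : ℕ) < k := i.isLt
      have hii : ι₂ ⟨(i : ℕ) - (k - r), by omega⟩ = i := by ext; simp only [hv2, Fin.val_mk]; omega
      have e1 : d (ι₂ ⟨(i : ℕ) - (k - r), by omega⟩) = b ⟨(i : ℕ) - (k - r), by omega⟩ := by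
        rw [hd, Finsupp.add_apply, Finsupp.mapDomain_apply hι₂inj,
          Finsupp.mapDomain_notin_range, zero_add]
        rintro ⟨j, hj⟩
        exact hdisj _ _ hj
      rw [← hii, e1]
      exact hb2 ⟨(i : ℕ) - (k - r), by omega⟩
  omega
end

section
/- Let t ≥ 0, 0 ≤ r ≤ 2^t − 1, and k ≥ 1, and let m_1,…,m_k be positive integers with m_i ≥ 2^{t+k-1} + r + 1 for all 1 ≤ i ≤ k. Then e_k^{2^t + r} ∉ (x_1^{m_1},…,x_k^{m_k}) in F_2[x_1,…,x_k]. -/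
open MvPolynomial

open Finset Polynomial

set_option linter.unusedSectionVars false


section Split
variable {M : Type*} [CommMonoid M] {k : ℕ}

lemma zmod2_prod (g : ZMod 2 → M) : ∏ a, g a = g 0 * g 1 := by
  have h : (Finset.univ : Finset (ZMod 2)) = {0, 1} := by decide
  rw [h, Finset.prod_insert (by decide), Finset.prod_singleton]

lemma prod_split_all (f : (Fin (k+1) → ZMod 2) → M) :
    ∏ α, f α = (∏ β, f (Fin.cons 0 β)) * ∏ β, f (Fin.cons 1 β) := by
  rw [← (Fin.consEquiv (fun _ : Fin (k+1) => ZMod 2)).prod_comp f, Fintype.prod_prod_type]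
  exact zmod2_prod (fun a => ∏ β, f (Fin.cons a β))

lemma cons_zero_eq_zero {β : Fin k → ZMod 2} :
    (Fin.cons (0 : ZMod 2) β : Fin (k+1) → ZMod 2) = 0 ↔ β = 0 := by
  constructor
  · intro h; funext i; have h2 := congrFun h i.succ; simpa using h2
  · intro h; subst h; funext i; refine Fin.cases ?_ ?_ i <;> simp

lemma cons_one_ne_zero {β : Fin k → ZMod 2} :
    (Fin.cons (1 : ZMod 2) β : Fin (k+1) → ZMod 2) ≠ 0 := by
  intro h
  have h2 := congrFun h 0
  simp at h2

lemma prod_split_ne (f : (Fin (k+1) → ZMod 2) → M) :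
    ∏ α ∈ Finset.univ.filter (fun α : Fin (k+1) → ZMod 2 => α ≠ 0), f α
      = (∏ β ∈ Finset.univ.filter (fun β : Fin k → ZMod 2 => β ≠ 0), f (Fin.cons (0 : ZMod 2) β))
        * ∏ β : Fin k → ZMod 2, f (Fin.cons (1 : ZMod 2) β) := by
  rw [Finset.prod_filter, Finset.prod_filter,
    prod_split_all (fun α => if α ≠ 0 then f α else 1)]
  congr 1
  · exact Finset.prod_congr rfl fun β _ => by simp only [ne_eq, cons_zero_eq_zero]
  · exact Finset.prod_congr rfl fun β _ => by rw [if_pos cons_one_ne_zero]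

end Split

section Shape

variable {A : Type*} [CommRing A] [Algebra (ZMod 2) A] [CharP A 2]

/-- The linear form `∑ αᵢ vᵢ`. -/
noncomputable def lin {k : ℕ} (v : Fin k → A) (α : Fin k → ZMod 2) : A :=
  ∑ i, algebraMap (ZMod 2) A (α i) * v i

lemma lin_cons {k : ℕ} (v : Fin (k+1) → A) (a : ZMod 2) (β : Fin k → ZMod 2) :
    lin v (Fin.cons a β) = algebraMap (ZMod 2) A a * v 0 + lin (v ∘ Fin.succ) β := by
  rw [lin, Fin.sum_univ_succ]
  simp [lin, Function.comp]

lemma lin_cons_zero {k : ℕ} (v : Fin (k+1) → A) (β : Fin k → ZMod 2) :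
    lin v (Fin.cons 0 β) = lin (v ∘ Fin.succ) β := by
  rw [lin_cons]; simp

lemma lin_cons_one {k : ℕ} (v : Fin (k+1) → A) (β : Fin k → ZMod 2) :
    lin v (Fin.cons 1 β) = v 0 + lin (v ∘ Fin.succ) β := by
  rw [lin_cons]; simp

lemma shape (k : ℕ) (v : Fin k → A) :
    ∃ d : ℕ → A, d k = 1
      ∧ d 0 = ∏ α ∈ Finset.univ.filter (fun α : Fin k → ZMod 2 => α ≠ 0), lin v α
      ∧ ∏ α : Fin k → ZMod 2, (Polynomial.X + Polynomial.C (lin v α))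
          = ∑ i ∈ Finset.range (k+1), Polynomial.C (d i) * Polynomial.X ^ (2^i) := by
  induction k with
  | zero =>
    refine ⟨fun _ => 1, rfl, ?_, ?_⟩
    · rw [Finset.filter_false_of_mem, Finset.prod_empty]
      intro α _
      simp [Subsingleton.elim α 0]
    · rw [Fintype.prod_subsingleton _ (fun i : Fin 0 => (0 : ZMod 2))]
      simp [lin]
  | succ k ih =>
    obtain ⟨d, hdk, hd0, hG⟩ := ih (v ∘ Fin.succ)
    set w := v ∘ Fin.succ with hw
    set c : A := ∏ β : Fin k → ZMod 2, (v 0 + lin w β) with hc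
    set F : Polynomial A := ∏ β : Fin k → ZMod 2, (Polynomial.X + Polynomial.C (lin w β)) with hF
    refine ⟨fun i => (if i < k+1 then c * d i else 0)
      + (if 1 ≤ i ∧ i < k+2 then d (i-1) ^ 2 else 0), ?_, ?_, ?_⟩
    · simp only [Nat.lt_irrefl, if_false, zero_add, if_pos (by omega : 1 ≤ k+1 ∧ k+1 < k+2)]
      rw [Nat.add_sub_cancel, hdk, one_pow]
    · have h1 : (0 : ℕ) < k + 1 := Nat.succ_pos k
      simp only [h1, if_true, if_pos]
      rw [if_neg (by omega), add_zero, hd0]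
      rw [prod_split_ne (fun α => lin v α)]
      have e0 : ∀ β : Fin k → ZMod 2, lin v (Fin.cons 0 β) = lin w β := lin_cons_zero v
      have e1 : ∀ β : Fin k → ZMod 2, lin v (Fin.cons 1 β) = v 0 + lin w β := lin_cons_one v
      rw [Finset.prod_congr rfl (fun β _ => e0 β), Finset.prod_congr rfl (fun β _ => e1 β)]
      rw [mul_comm]
    · rw [prod_split_all (fun α => Polynomial.X + Polynomial.C (lin v α))]
      have hA : (∏ β : Fin k → ZMod 2, (Polynomial.X + Polynomial.C (lin v (Fin.cons 0 β)))) = F := by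
        rw [hF]; exact Finset.prod_congr rfl fun β _ => by rw [lin_cons_zero]
      have hB : (∏ β : Fin k → ZMod 2, (Polynomial.X + Polynomial.C (lin v (Fin.cons 1 β)))) = F + Polynomial.C c := by
        have heval : Polynomial.eval (v 0) F = c := by
          rw [hF, Polynomial.eval_prod, hc]
          exact Finset.prod_congr rfl fun β _ => by simp
        have heval2 : Polynomial.eval (v 0) F = ∑ i ∈ Finset.range (k+1), d i * (v 0) ^ (2^i) := by
          rw [hG, Polynomial.eval_finset_sum]
          exact Finset.sum_congr rfl fun i _ => by simp
        set ψ : Polynomial A →+* Polynomial A :=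
          Polynomial.eval₂RingHom (Polynomial.C : A →+* Polynomial A)
            (Polynomial.X + Polynomial.C (v 0)) with hψ
        have h1 : (∏ β : Fin k → ZMod 2, (Polynomial.X + Polynomial.C (lin v (Fin.cons 1 β)))) = ψ F := by
          rw [hF, map_prod]
          refine Finset.prod_congr rfl fun β _ => ?_
          rw [lin_cons_one]
          simp only [map_add, hψ, Polynomial.coe_eval₂RingHom, Polynomial.eval₂_X,
            Polynomial.eval₂_C]
          ring
        have h2 : ψ F = F + Polynomial.C c := by
          rw [hG, map_sum]
          have : ∀ i ∈ Finset.range (k+1),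
              ψ (Polynomial.C (d i) * Polynomial.X ^ (2^i))
                = Polynomial.C (d i) * Polynomial.X ^ (2^i)
                  + Polynomial.C (d i * (v 0) ^ (2^i)) := by
            intro i _
            rw [map_mul, map_pow]
            simp only [hψ, Polynomial.coe_eval₂RingHom, Polynomial.eval₂_C, Polynomial.eval₂_X]
            rw [add_pow_char_pow, mul_add, ← Polynomial.C_pow, ← Polynomial.C_mul]
          rw [Finset.sum_congr rfl this, Finset.sum_add_distrib, ← map_sum Polynomial.C, ← heval2, heval]
        rw [h1, h2]
      rw [hA, hB]
      have hsq : F * (F + Polynomial.C c)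
          = (∑ i ∈ Finset.range (k+1), Polynomial.C (c * d i) * Polynomial.X ^ (2^i))
            + ∑ i ∈ Finset.range (k+1), Polynomial.C (d i ^ 2) * Polynomial.X ^ (2^(i+1)) := by
        rw [mul_add, add_comm]
        congr 1
        · rw [hG, Finset.sum_mul]
          refine Finset.sum_congr rfl fun i _ => ?_
          rw [mul_right_comm, ← Polynomial.C_mul, mul_comm (d i) c]
        · rw [← sq, hG, sum_pow_char]
          refine Finset.sum_congr rfl fun i _ => ?_
          rw [mul_pow, ← Polynomial.C_pow, ← pow_mul, ← pow_succ]
      rw [hsq]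
      have hS : (∑ i ∈ Finset.range (k+2),
          Polynomial.C ((if i < k+1 then c * d i else 0) + (if 1 ≤ i ∧ i < k+2 then d (i-1) ^ 2 else 0))
            * Polynomial.X ^ (2^i))
          = (∑ i ∈ Finset.range (k+1), Polynomial.C (c * d i) * Polynomial.X ^ (2^i))
            + ∑ i ∈ Finset.range (k+1), Polynomial.C (d i ^ 2) * Polynomial.X ^ (2^(i+1)) := by
        have hsplit : ∀ i ∈ Finset.range (k+2),
            Polynomial.C ((if i < k+1 then c * d i else 0) + (if 1 ≤ i ∧ i < k+2 then d (i-1) ^ 2 else 0))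
              * Polynomial.X ^ (2^i)
            = Polynomial.C (if i < k+1 then c * d i else 0) * Polynomial.X ^ (2^i)
              + Polynomial.C (if 1 ≤ i ∧ i < k+2 then d (i-1) ^ 2 else 0) * Polynomial.X ^ (2^i) := by
          intro i _
          rw [Polynomial.C_add, add_mul]
        rw [Finset.sum_congr rfl hsplit, Finset.sum_add_distrib]
        congr 1
        · rw [Finset.sum_range_succ, if_neg (by omega), Polynomial.C_0, zero_mul, add_zero]
          refine Finset.sum_congr rfl fun i hi => ?_
          rw [if_pos (Finset.mem_range.mp hi)]
        · rw [Finset.sum_range_succ']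
          rw [if_neg (by omega), Polynomial.C_0, zero_mul, add_zero]
          refine Finset.sum_congr rfl fun i hi => ?_
          rw [if_pos (by have := Finset.mem_range.mp hi; omega : 1 ≤ i+1 ∧ i+1 < k+2), Nat.add_sub_cancel]
      rw [hS]

end Shape

section Coeff
variable {A : Type*} [CommRing A] [CharP A 2]

lemma coeff_sq (H : Polynomial A) (n : ℕ) :
    (H ^ 2).coeff n = if 2 ∣ n then (H.coeff (n / 2)) ^ 2 else 0 := by
  rw [← Polynomial.map_frobenius_expand 2 H, Polynomial.coeff_map,
    Polynomial.coeff_expand (by norm_num : 0 < 2)]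
  rw [apply_ite (frobenius A 2), frobenius_def, map_zero]

lemma Gd_coeff (K : ℕ) (d : ℕ → A) (n : ℕ) :
    ((∑ i ∈ Finset.range (K+1), Polynomial.C (d i) * Polynomial.X ^ (2^i)) : Polynomial A).coeff n
      = ∑ i ∈ Finset.range (K+1), if n = 2^i then d i else 0 := by
  rw [Polynomial.finset_sum_coeff]
  exact Finset.sum_congr rfl fun i _ => by
    rw [Polynomial.coeff_C_mul, Polynomial.coeff_X_pow, mul_ite, mul_one, mul_zero]

lemma Gd_coeff_top (K : ℕ) (d : ℕ → A) :
    ((∑ i ∈ Finset.range (K+1), Polynomial.C (d i) * Polynomial.X ^ (2^i)) : Polynomial A).coeff (2^K)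
      = d K := by
  rw [Gd_coeff]
  rw [Finset.sum_eq_single K]
  · rw [if_pos rfl]
  · intro i _ hiK
    rw [if_neg fun h => hiK (Nat.pow_right_injective (le_refl 2) h.symm)]
  · intro h
    exact absurd (Finset.mem_range.mpr (Nat.lt_succ_self K)) h

lemma Gd_coeff_odd (K : ℕ) (d : ℕ → A) (n : ℕ) (hn : n % 2 = 1) :
    ((∑ i ∈ Finset.range (K+1), Polynomial.C (d i) * Polynomial.X ^ (2^i)) : Polynomial A).coeff n
      = if n = 1 then d 0 else 0 := by
  rw [Gd_coeff]
  rw [Finset.sum_eq_single 0]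
  · rfl
  · intro i _ hi0
    rw [if_neg]
    intro h
    have h2 : 2 ∣ n := h ▸ dvd_pow_self 2 hi0
    omega
  · intro h
    exact absurd (Finset.mem_range.mpr (Nat.succ_pos K)) h

lemma coeff_pow (K : ℕ) (d : ℕ → A) (hdK : d K = 1) :
    ∀ t r : ℕ, r < 2^t →
      (((∑ i ∈ Finset.range (K+1), Polynomial.C (d i) * Polynomial.X ^ (2^i)) : Polynomial A)
          ^ (2^t + r)).coeff (2^(t+K) + r) = d 0 ^ r := by
  intro t
  induction t with
  | zero =>
    intro r hr
    have h0 : r = 0 := by omega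
    subst h0
    rw [pow_zero, add_zero, add_zero, pow_one, zero_add, Gd_coeff_top K d, hdK, pow_zero]
  | succ t ih =>
    intro r hr
    have h2t : 2^(t+1) = 2 * 2^t := by rw [pow_succ]; ring
    have h2tK : 2^(t+1+K) = 2 * 2^(t+K) := by
      rw [show t+1+K = (t+K)+1 by omega, pow_succ]; ring
    rcases Nat.even_or_odd r with ⟨q, hq⟩ | ⟨q, hq⟩
    · -- r = q + q
      have hq2 : q < 2^t := by omega
      have e1 : 2^(t+1) + r = (2^t + q) * 2 := by omega
      have e2 : 2^(t+1+K) + r = 2 * (2^(t+K) + q) := by omega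
      rw [e1, e2, pow_mul, coeff_sq, if_pos ⟨_, rfl⟩,
        Nat.mul_div_cancel_left _ (by norm_num : 0 < 2), ih q hq2, ← pow_mul]
      congr 1
      omega
    · -- r = 2*q+1
      have hq2 : q < 2^t := by omega
      have e1 : 2^(t+1) + r = (2^t + q) * 2 + 1 := by omega
      set e := 2^(t+1+K) + r with he
      have heo : e % 2 = 1 := by omega
      rw [e1, pow_succ, pow_mul, Polynomial.coeff_mul]
      rw [Finset.sum_eq_single (e - 1, 1)]
      · have hev : e - 1 = 2 * (2^(t+K) + q) := by omega
        rw [coeff_sq, hev, if_pos ⟨_, rfl⟩, Nat.mul_div_cancel_left _ (by norm_num : 0 < 2),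
          ih q hq2, Gd_coeff_odd K d 1 rfl, if_pos rfl, ← pow_mul, ← pow_succ]
        congr 1
        omega
      · rintro ⟨a, b⟩ hab hne
        have hab2 : a + b = e := Finset.HasAntidiagonal.mem_antidiagonal.mp hab
        rcases Nat.even_or_odd a with ⟨u, hu⟩ | ⟨u, hu⟩
        · -- a even, so b odd and b ≠ 1
          have hb : b % 2 = 1 := by omega
          have hb1 : b ≠ 1 := by
            intro h1
            exact hne (by rw [h1] at hab2 ⊢; rw [show a = e - 1 by omega])
          rw [Gd_coeff_odd K d b hb, if_neg hb1, mul_zero]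
        · rw [coeff_sq, if_neg (by omega), zero_mul]
      · intro h
        exact absurd (Finset.HasAntidiagonal.mem_antidiagonal.mpr (by omega)) h

end Coeff

lemma phi_lin (K : ℕ) (α : Fin (K+1) → ZMod 2) :
    MvPolynomial.finSuccEquiv (ZMod 2) K (∑ i, MvPolynomial.C (α i) * MvPolynomial.X i)
      = Polynomial.C (MvPolynomial.C (α 0)) * Polynomial.X
        + Polynomial.C (∑ i : Fin K, MvPolynomial.C (α i.succ) * MvPolynomial.X i) := by
  rw [map_sum, Fin.sum_univ_succ]
  congr 1
  · rw [map_mul, MvPolynomial.finSuccEquiv_X_zero]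
    congr 1
    simp [MvPolynomial.finSuccEquiv_apply]
  · rw [map_sum Polynomial.C]
    refine Finset.sum_congr rfl fun i _ => ?_
    rw [map_mul, MvPolynomial.finSuccEquiv_X_succ, Polynomial.C_mul]
    congr 1
    simp [MvPolynomial.finSuccEquiv_apply]

lemma ek_eq (k : ℕ) :
    ek k = ∏ α ∈ Finset.univ.filter (fun α : Fin k → ZMod 2 => α ≠ 0),
      lin (fun i : Fin k => (MvPolynomial.X i : MvPolynomial (Fin k) (ZMod 2))) α := by
  unfold ek lin
  refine Finset.prod_congr rfl fun α _ => Finset.sum_congr rfl fun i _ => ?_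
  rw [MvPolynomial.algebraMap_eq]

lemma phi_ek (K : ℕ) :
    MvPolynomial.finSuccEquiv (ZMod 2) K (ek (K+1))
      = Polynomial.C (ek K)
        * ∏ β : Fin K → ZMod 2,
            (Polynomial.X + Polynomial.C (lin (fun i : Fin K =>
              (MvPolynomial.X i : MvPolynomial (Fin K) (ZMod 2))) β)) := by
  rw [ek, map_prod,
    prod_split_ne (fun α : Fin (K+1) → ZMod 2 =>
      MvPolynomial.finSuccEquiv (ZMod 2) K (∑ i, MvPolynomial.C (α i) * MvPolynomial.X i))]
  congr 1
  · have h : ∀ β ∈ Finset.univ.filter (fun β : Fin K → ZMod 2 => β ≠ 0),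
        MvPolynomial.finSuccEquiv (ZMod 2) K
            (∑ i : Fin (K+1), MvPolynomial.C ((Fin.cons (0 : ZMod 2) β : Fin (K+1) → ZMod 2) i)
              * MvPolynomial.X i)
          = Polynomial.C (∑ i : Fin K, MvPolynomial.C (β i) * MvPolynomial.X i) := by
      intro β _
      rw [phi_lin]
      simp [Fin.cons_zero, Fin.cons_succ]
    rw [Finset.prod_congr rfl h, ek]
    exact (map_prod (Polynomial.C :
      MvPolynomial (Fin K) (ZMod 2) →+* Polynomial (MvPolynomial (Fin K) (ZMod 2))) _ _).symm
  · refine Finset.prod_congr rfl fun β _ => ?_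
    rw [phi_lin]
    simp only [Fin.cons_zero, Fin.cons_succ, map_one, one_mul, lin,
      MvPolynomial.algebraMap_eq]


lemma reduce (K t r : ℕ) (m : Fin (K+1) → ℕ) (hr : r < 2^t) (hm0 : 2^(t+K) + r + 1 ≤ m 0)
    (H : ek (K+1) ^ (2^t + r)
        ∈ Ideal.span (Set.range fun i : Fin (K+1) => MvPolynomial.X i ^ m i)) :
    ek K ^ (2^t + 2*r)
      ∈ Ideal.span (Set.range fun i : Fin K => MvPolynomial.X i ^ m i.succ) := by
  classical
  set S := MvPolynomial (Fin K) (ZMod 2) with hS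
  set I₀ : Ideal S :=
    Ideal.span (Set.range fun i : Fin K => MvPolynomial.X i ^ m i.succ) with hI₀
  let J : Ideal (Polynomial S) :=
    { carrier := {p | ∀ n, n ≤ 2^(t+K) + r → p.coeff n ∈ I₀}
      add_mem' := fun {p q} hp hq n hn => by
        rw [Polynomial.coeff_add]; exact I₀.add_mem (hp n hn) (hq n hn)
      zero_mem' := fun n hn => by rw [Polynomial.coeff_zero]; exact I₀.zero_mem
      smul_mem' := fun q p hp n hn => by
        rw [smul_eq_mul, Polynomial.coeff_mul]
        refine Ideal.sum_mem _ fun ab hab => Ideal.mul_mem_left _ _ (hp ab.2 ?_)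
        have h := Finset.HasAntidiagonal.mem_antidiagonal.mp hab
        omega }
  have hmem : (MvPolynomial.finSuccEquiv (ZMod 2) K) (ek (K+1) ^ (2^t + r))
      ∈ Ideal.map (MvPolynomial.finSuccEquiv (ZMod 2) K)
          (Ideal.span (Set.range fun i : Fin (K+1) => MvPolynomial.X i ^ m i)) :=
    Ideal.mem_map_of_mem _ H
  rw [Ideal.map_span, ← Set.range_comp] at hmem
  have hle : Ideal.span (Set.range ((MvPolynomial.finSuccEquiv (ZMod 2) K)
      ∘ fun i : Fin (K+1) => MvPolynomial.X i ^ m i)) ≤ J := by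
    rw [Ideal.span_le]
    rintro _ ⟨i, rfl⟩
    refine Fin.cases ?_ ?_ i
    · intro n hn
      show ((MvPolynomial.finSuccEquiv (ZMod 2) K) (MvPolynomial.X 0 ^ m 0)).coeff n ∈ I₀
      rw [map_pow, MvPolynomial.finSuccEquiv_X_zero, Polynomial.coeff_X_pow,
        if_neg (by omega)]
      exact I₀.zero_mem
    · intro i n hn
      show ((MvPolynomial.finSuccEquiv (ZMod 2) K)
        (MvPolynomial.X i.succ ^ m i.succ)).coeff n ∈ I₀
      rw [map_pow, MvPolynomial.finSuccEquiv_X_succ, ← map_pow, Polynomial.coeff_C]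
      split_ifs
      · exact Ideal.subset_span ⟨i, rfl⟩
      · exact I₀.zero_mem
  have hco := hle hmem (2^(t+K) + r) le_rfl
  obtain ⟨d, hdK, hd0, hG⟩ := shape K (fun i : Fin K => (MvPolynomial.X i : S))
  rw [map_pow, phi_ek, mul_pow, ← Polynomial.C_pow, hG, Polynomial.coeff_C_mul,
    coeff_pow K d hdK t r hr] at hco
  rw [hd0, ← ek_eq, ← pow_add] at hco
  have harith : 2^t + 2*r = 2^t + r + r := by omega
  rw [harith]
  exact hco

lemma key : ∀ (K t r : ℕ) (m : Fin (K+1) → ℕ), r < 2^t → (∀ i, 2^(t+K) + r + 1 ≤ m i) →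
    ek (K+1) ^ (2^t + r)
      ∉ Ideal.span (Set.range fun i : Fin (K+1) => MvPolynomial.X i ^ m i) := by
  intro K
  induction K with
  | zero =>
    intro t r m hr hm H
    have h := reduce 0 t r m hr (hm 0) H
    rw [Set.range_eq_empty, Ideal.span_empty, Ideal.mem_bot] at h
    have he : ek 0 = 1 := by
      rw [ek, Finset.filter_false_of_mem, Finset.prod_empty]
      intro α _ hα
      exact hα (Subsingleton.elim α 0)
    rw [he, one_pow] at h
    exact one_ne_zero h
  | succ K ih =>
    intro t r m hr hm H
    have h := reduce (K+1) t r m hr (hm 0) H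
    have hpow : (2:ℕ)^t ≤ 2^(t+K) := Nat.pow_le_pow_right (by norm_num) (by omega)
    have hpow2 : (2:ℕ)^(t+(K+1)) = 2*2^(t+K) := by
      rw [show t+(K+1) = (t+K)+1 by omega, pow_succ]; ring
    by_cases hc : 2*r < 2^t
    · refine ih t (2*r) (fun i => m i.succ) hc (fun i => ?_) h
      have := hm i.succ
      show 2^(t+K) + 2*r + 1 ≤ m i.succ
      omega
    · have h2t : (2:ℕ)^(t+1) = 2*2^t := by rw [pow_succ]; ring
      have hpow3 : (2:ℕ)^(t+1+K) = 2*2^(t+K) := by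
        rw [show t+1+K = (t+K)+1 by omega, pow_succ]; ring
      have hexp : 2^t + 2*r = 2^(t+1) + (2*r - 2^t) := by omega
      rw [hexp] at h
      refine ih (t+1) (2*r - 2^t) (fun i => m i.succ) (by omega) (fun i => ?_) h
      have := hm i.succ
      show 2^(t+1+K) + (2*r - 2^t) + 1 ≤ m i.succ
      omega

theorem stmt11 (t r k : ℕ) (hr : r ≤ 2 ^ t - 1) (hk : 1 ≤ k)
    (mv : Fin k → ℕ) (hmvpos : ∀ i, 0 < mv i)
    (hmv : ∀ i : Fin k, 2 ^ (t + k - 1) + r + 1 ≤ mv i) :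
    ek k ^ (2 ^ t + r) ∉ Ideal.span (Set.range fun i : Fin k => X i ^ mv i) := by
  match k, hk with
  | K+1, _ =>
    have h1 : (1:ℕ) ≤ 2^t := Nat.one_le_two_pow
    refine key K t r mv (by omega) fun i => ?_
    have := hmv i
    have he : t + (K+1) - 1 = t + K := by omega
    rwa [he] at this
end
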